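/- Fix an integer n ≥ 1, a real number P ∈ (0,1), and a real number c > 0, and set D = 1 − (c/n)·ln(1−P) (note D > 0). Let γ : ℕ → ℝ be a sequence with γ_m > 0 for all m and γ_m/m → c as m → ∞. Then lim_{m→∞} T(m, γ_m, P) = (−1)^n·(1−P)·D^{−n} − (−1)^n·(1−P)^{(n−1)/n}·e^{1/c}·Σ_{ℓ=0}^{n−1} ((−1)^ℓ/(ℓ!·c^ℓ))·D^{−(n−ℓ)}. -/

import Mathlib

/-!
With `Q = 1 - P`, the `k`-th summand of `T(m,γ,P)` is `Q^{(m-1)/m} γ^{-n} C(n-1+k,k) r^k` for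
`r = (1 + 1/γ) Q^{-1/(mn)}`. A partial negative-binomial sum is a binomial tail:
`(1-r)^n Σ_{k<m-n} C(n-1+k,k) r^k = 1 - Σ_{j<n} C(m-1,j) (1-r)^j r^{m-1-j}`.
Since `m (r - 1) → D/c` and `γ (r - 1) → D`, each binomial term tends to the Poisson weight
`(-D/c)^j / j! · e^{D/c}`, and the limit follows.
-/

open Filter

/-- The function `T(m,γ,P)` of Appendix D of the paper. -/
noncomputable def rocT (n m : ℕ) (γ P : ℝ) : ℝ :=
  ∑ k ∈ Finset.range (m - n),
    ((n + k - 1).factorial : ℝ) / (k.factorial * (n - 1).factorial * γ ^ n) *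
      (1 + 1 / γ) ^ k * (1 - P) ^ (((n : ℝ) * ((m : ℝ) - 1) - k) / ((m : ℝ) * n))

open Topology Finset Real

section BinomialSums

variable {R : Type*} [CommRing R]

theorem sum_range_choose_succ_mul_pow_mul_pow {a b : R} (hab : a + b = 1) (N s : ℕ) :
    ∑ j ∈ range (s + 1), ((N + 1).choose j : R) * a ^ j * b ^ (N + 1 - j) =
      ∑ j ∈ range (s + 1), (N.choose j : R) * a ^ j * b ^ (N - j) -
        N.choose s * a ^ (s + 1) * b ^ (N - s) := by
  induction s with
  | zero =>
    simp only [zero_add, sum_range_one, Nat.choose_zero_right, Nat.cast_one, Nat.sub_zero,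
      pow_zero, pow_succ]
    linear_combination b ^ N * hab
  | succ s ih =>
    rw [sum_range_succ _ (s + 1), sum_range_succ _ (s + 1), ih, Nat.choose_succ_succ',
      Nat.add_sub_add_right]
    rcases le_or_gt (s + 1) N with hsN | hNs
    · rw [show N - s = N - (s + 1) + 1 by omega]
      push_cast
      linear_combination (N.choose (s + 1) : R) * a ^ (s + 1) * b ^ (N - (s + 1)) * hab
    · rw [Nat.choose_eq_zero_of_lt hNs]
      push_cast
      ring

theorem one_sub_pow_mul_sum_range_choose_mul_pow (x : R) (s M : ℕ) :
    (1 - x) ^ (s + 1) * ∑ k ∈ range M, ((s + k).choose k : R) * x ^ k =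
      1 - ∑ j ∈ range (s + 1), ((M + s).choose j : R) * (1 - x) ^ j * x ^ (M + s - j) := by
  induction M with
  | zero =>
    have h : ∑ j ∈ range (s + 1), (s.choose j : R) * (1 - x) ^ j * x ^ (s - j) = 1 :=
      calc _ = (1 - x + x) ^ s := by rw [add_pow]; exact sum_congr rfl fun j _ => by ring
        _ = 1 := by rw [sub_add_cancel, one_pow]
    rw [sum_range_zero, mul_zero, zero_add, h, sub_self]
  | succ M ih =>
    rw [sum_range_succ, mul_add, ih, show M + 1 + s = M + s + 1 by omega,
      sum_range_choose_succ_mul_pow_mul_pow (sub_add_cancel 1 x), Nat.add_sub_cancel,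
      add_comm s M, Nat.choose_symm_add]
    ring

end BinomialSums

theorem tendsto_zero_of_tendsto_nat_mul {g : ℕ → ℝ} {t : ℝ}
    (h : Tendsto (fun m : ℕ => (m : ℝ) * g m) atTop (𝓝 t)) : Tendsto g atTop (𝓝 0) := by
  have h0 := h.mul (tendsto_inv_atTop_nhds_zero_nat (𝕜 := ℝ))
  rw [mul_zero] at h0
  refine h0.congr' ?_
  filter_upwards [eventually_ne_atTop 0] with m hm
  field_simp

theorem tendsto_pow_sub_of_tendsto_nat_mul_sub_one {r : ℕ → ℝ} {t : ℝ}
    (h : Tendsto (fun m : ℕ => (m : ℝ) * (r m - 1)) atTop (𝓝 t)) (i : ℕ) :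
    Tendsto (fun m => r m ^ (m - i)) atTop (𝓝 (exp t)) := by
  have hr : Tendsto r atTop (𝓝 1) := by
    simpa using (tendsto_zero_of_tendsto_nat_mul h).add_const 1
  have hpow : Tendsto (fun m => r m ^ m) atTop (𝓝 (exp t)) := by
    simpa using Real.tendsto_one_add_pow_exp_of_tendsto h
  have hdiv := hpow.div (hr.pow i) (by simp)
  rw [one_pow, div_one] at hdiv
  refine hdiv.congr' ?_
  filter_upwards [eventually_ge_atTop i, hr.eventually_ne one_ne_zero] with m hm hr0
  rw [Pi.div_apply, pow_sub₀ _ hr0 hm, div_eq_mul_inv]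

theorem tendsto_choose_mul_pow {α : Type*} {l : Filter α} {N : α → ℕ} {y : α → ℝ} {t : ℝ}
    (hy : Tendsto y l (𝓝 0)) (h : Tendsto (fun x => (N x : ℝ) * y x) l (𝓝 t)) (j : ℕ) :
    Tendsto (fun x => ((N x).choose j : ℝ) * y x ^ j) l (𝓝 (t ^ j / j.factorial)) := by
  have hprod : Tendsto (fun x => ∏ i ∈ range j, ((N x : ℝ) - i) * y x) l (𝓝 (t ^ j)) := by
    have h' := tendsto_finsetProd (range j) fun (i : ℕ) _ => by
      simpa only [mul_zero, sub_zero, ← sub_mul] using h.sub (hy.const_mul (i : ℝ))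
    rwa [prod_const, card_range] at h'
  refine (hprod.div_const _).congr fun x => ?_
  rw [prod_mul_distrib, prod_const, card_range, ← descPochhammer_eval_eq_prod_range,
    descPochhammer_eval_eq_descFactorial, Nat.descFactorial_eq_factorial_mul_choose]
  push_cast
  field_simp

theorem tendsto_choose_mul_pow_mul_pow_sub {r : ℕ → ℝ} {t : ℝ}
    (h : Tendsto (fun m : ℕ => (m : ℝ) * (r m - 1)) atTop (𝓝 t)) (j : ℕ) :
    Tendsto (fun m : ℕ => ((m - 1).choose j : ℝ) * (1 - r m) ^ j * r m ^ (m - 1 - j)) atTop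
      (𝓝 ((-t) ^ j / j.factorial * exp t)) := by
  have hr := tendsto_zero_of_tendsto_nat_mul h
  have hy : Tendsto (fun m => 1 - r m) atTop (𝓝 0) := by simpa using hr.neg
  have hN : Tendsto (fun m : ℕ => ((m - 1 : ℕ) : ℝ) * (1 - r m)) atTop (𝓝 (-t)) := by
    have h' := h.neg.add hr
    rw [add_zero] at h'
    refine h'.congr' ?_
    filter_upwards [eventually_ge_atTop 1] with m hm
    rw [Nat.cast_sub hm]
    push_cast
    ring
  simpa only [Nat.sub_sub] using
    (tendsto_choose_mul_pow hy hN j).mul (tendsto_pow_sub_of_tendsto_nat_mul_sub_one h (1 + j))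

theorem tendsto_mul_one_sub_of_tendsto_nat_mul_sub_one {γ r : ℕ → ℝ} {c t : ℝ}
    (hγ : Tendsto (fun m : ℕ => γ m / m) atTop (𝓝 c))
    (hr : Tendsto (fun m : ℕ => (m : ℝ) * (r m - 1)) atTop (𝓝 t)) :
    Tendsto (fun m => γ m * (1 - r m)) atTop (𝓝 (-(c * t))) := by
  refine (hγ.mul hr).neg.congr' ?_
  filter_upwards [eventually_ne_atTop 0] with m hm
  field_simp
  ring

theorem tendsto_rpow_sub_one_div_self {b : ℝ} (hb : b ≠ 0) :
    Tendsto (fun m : ℕ => b ^ (((m : ℝ) - 1) / m)) atTop (𝓝 b) := by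
  have h : Tendsto (fun m : ℕ => 1 - 1 / (m : ℝ)) atTop (𝓝 1) := by
    simpa using (tendsto_const_nhds (x := (1 : ℝ))).sub tendsto_one_div_atTop_nhds_zero_nat
  have h' : Tendsto (fun m : ℕ => ((m : ℝ) - 1) / m) atTop (𝓝 1) := by
    refine h.congr' ?_
    filter_upwards [eventually_ne_atTop 0] with m hm
    field_simp
  simpa using tendsto_const_nhds.rpow h' (Or.inl hb)

noncomputable def rocRatio (n m : ℕ) (γ P : ℝ) : ℝ := (1 + 1 / γ) * (1 - P)⁻¹ ^ ((m : ℝ) * n)⁻¹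

theorem pow_mul_rocT {n m : ℕ} (hn : 1 ≤ n) (hnm : n < m) {γ P : ℝ} (hγ : γ ≠ 0) (hP : P < 1) :
    (γ * (1 - rocRatio n m γ P)) ^ n * rocT n m γ P =
      (1 - P) ^ (((m : ℝ) - 1) / m) * (1 - ∑ j ∈ range n,
        ((m - 1).choose j : ℝ) * (1 - rocRatio n m γ P) ^ j * rocRatio n m γ P ^ (m - 1 - j)) := by
  set r := rocRatio n m γ P with hr
  have hQ : 0 < 1 - P := by linarith
  have hm : (m : ℝ) ≠ 0 := Nat.cast_ne_zero.2 (by omega)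
  have hn' : (n : ℝ) ≠ 0 := Nat.cast_ne_zero.2 (by omega)
  have hterm (k : ℕ) : ((n + k - 1).factorial : ℝ) / (k.factorial * (n - 1).factorial * γ ^ n) *
      (1 + 1 / γ) ^ k * (1 - P) ^ (((n : ℝ) * ((m : ℝ) - 1) - k) / ((m : ℝ) * n)) =
      (1 - P) ^ (((m : ℝ) - 1) / m) / γ ^ n * (((n - 1 + k).choose k : ℝ) * r ^ k) := by
    have hchoose : ((n - 1 + k).choose k : ℝ) =
        (n + k - 1).factorial / (k.factorial * (n - 1).factorial) := by
      rw [add_comm, Nat.cast_add_choose, show k + (n - 1) = n + k - 1 by omega]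
    have hrpow : (1 - P) ^ (((n : ℝ) * ((m : ℝ) - 1) - k) / ((m : ℝ) * n)) =
        (1 - P) ^ (((m : ℝ) - 1) / m) * ((1 - P)⁻¹ ^ ((m : ℝ) * n)⁻¹) ^ k := by
      rw [Real.inv_rpow hQ.le, inv_pow, ← Real.rpow_natCast, ← Real.rpow_mul hQ.le,
        ← Real.rpow_neg hQ.le, ← Real.rpow_add hQ]
      congr 1
      field_simp
      ring
    rw [hchoose, hrpow, hr, rocRatio, mul_pow]
    field_simp
  rw [rocT, sum_congr rfl fun k _ => hterm k, ← mul_sum]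
  have key := one_sub_pow_mul_sum_range_choose_mul_pow r (n - 1) (m - n)
  rw [Nat.sub_add_cancel hn, show m - n + (n - 1) = m - 1 by omega] at key
  rw [← key, mul_pow]
  field_simp

theorem tendsto_nat_mul_rocRatio_sub_one {n : ℕ} (hn : n ≠ 0) {P c : ℝ} (hP : P < 1) (hc : c ≠ 0)
    {γ : ℕ → ℝ} (hγ : Tendsto (fun m : ℕ => γ m / m) atTop (𝓝 c)) :
    Tendsto (fun m : ℕ => (m : ℝ) * (rocRatio n m (γ m) P - 1)) atTop
      (𝓝 (1 / c - log (1 - P) / n)) := by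
  set E : ℕ → ℝ := fun m => (1 - P)⁻¹ ^ ((m : ℝ) * n)⁻¹
  have hp : Tendsto (fun m : ℕ => ((m : ℝ) * n)⁻¹) atTop (𝓝[>] 0) :=
    tendsto_inv_atTop_nhdsGT_zero.comp
      (tendsto_natCast_atTop_atTop.atTop_mul_const (by positivity))
  have hE : Tendsto (fun m : ℕ => (m : ℝ) * (E m - 1)) atTop (𝓝 (-log (1 - P) / n)) := by
    have h := ((tendsto_rpow_sub_one_log (inv_pos.2 (sub_pos.2 hP))).comp hp).div_const (n : ℝ)
    rw [Real.log_inv] at h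
    refine h.congr fun m => ?_
    simp only [Function.comp_apply, inv_inv, E]
    field_simp
  have hE1 : Tendsto E atTop (𝓝 1) := by
    simpa using (tendsto_zero_of_tendsto_nat_mul hE).add_const 1
  have hmγ : Tendsto (fun m : ℕ => (m : ℝ) / γ m) atTop (𝓝 (1 / c)) := by
    simpa only [inv_div, one_div] using hγ.inv₀ hc
  convert hE.add (hmγ.mul hE1) using 2 with m
  · simp only [rocRatio, E]
    ring
  · ring

theorem rocT_limit_value_eq {n : ℕ} (hn : n ≠ 0) {Q c D : ℝ} (hQ : 0 < Q) (hc : c ≠ 0)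
    (hD : D = 1 - c / n * log Q) (hD0 : D ≠ 0) :
    Q * (1 - ∑ j ∈ range n, (-(D / c)) ^ j / j.factorial * exp (D / c)) / (-D) ^ n =
      (-1) ^ n * Q * (D ^ n)⁻¹ - (-1) ^ n * Q ^ (((n : ℝ) - 1) / n) * exp (1 / c) *
        ∑ ℓ ∈ range n, ((-1) ^ ℓ / (ℓ.factorial * c ^ ℓ)) * (D ^ (n - ℓ))⁻¹ := by
  have hexp : exp (D / c) * Q = exp (1 / c) * Q ^ (((n : ℝ) - 1) / n) := by
    rw [rpow_def_of_pos hQ, ← exp_add]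
    conv_lhs => rw [← exp_log hQ, ← exp_add]
    congr 1
    rw [hD]
    field_simp
    ring
  have hinv : ((-D) ^ n)⁻¹ = (-1) ^ n * (D ^ n)⁻¹ := by
    rw [neg_pow, mul_inv, ← inv_pow, inv_neg, inv_one]
  rw [div_eq_mul_inv, hinv, mul_sub, sub_mul, mul_sum, sum_mul, mul_sum]
  congr 1
  · ring
  · refine sum_congr rfl fun j hj => ?_
    rw [pow_sub₀ D hD0 (mem_range.1 hj).le, neg_pow, div_pow]
    field_simp
    linear_combination hexp

theorem T_limit_general (n : ℕ) (hn : 1 ≤ n) (P : ℝ) (hP : P ∈ Set.Ioo (0 : ℝ) 1)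
    (c : ℝ) (hc : 0 < c) (D : ℝ) (hD : D = 1 - c / n * Real.log (1 - P))
    (γ : ℕ → ℝ)
    (hγ : Tendsto (fun m : ℕ => γ m / m) atTop (nhds c)) :
    Tendsto (fun m : ℕ => rocT n m (γ m) P) atTop
      (nhds ((-1 : ℝ) ^ n * (1 - P) * (D ^ n)⁻¹ -
        (-1 : ℝ) ^ n * (1 - P) ^ (((n : ℝ) - 1) / n) * Real.exp (1 / c) *
          ∑ ℓ ∈ Finset.range n, ((-1 : ℝ) ^ ℓ / (ℓ.factorial * c ^ ℓ)) * (D ^ (n - ℓ))⁻¹)) := by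
  obtain ⟨hP0, hP1⟩ := hP
  have hn0 : n ≠ 0 := Nat.one_le_iff_ne_zero.mp hn
  have hD0 : D ≠ 0 := by
    have : c / n * log (1 - P) < 0 :=
      mul_neg_of_pos_of_neg (div_pos hc (Nat.cast_pos.2 hn)) (log_neg (by linarith) (by linarith))
    linarith
  set r := fun m : ℕ => rocRatio n m (γ m) P
  have hmr : Tendsto (fun m : ℕ => (m : ℝ) * (r m - 1)) atTop (𝓝 (D / c)) := by
    convert tendsto_nat_mul_rocRatio_sub_one hn0 hP1 hc.ne' hγ using 2
    rw [hD]
    field_simp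
  have hγr := tendsto_mul_one_sub_of_tendsto_nat_mul_sub_one hγ hmr
  rw [mul_div_cancel₀ _ hc.ne'] at hγr
  have hQ := tendsto_rpow_sub_one_div_self (b := 1 - P) (by linarith)
  have hS := tendsto_finsetSum (range n) fun j _ => tendsto_choose_mul_pow_mul_pow_sub hmr j
  have hlim := (hQ.mul ((tendsto_const_nhds (x := (1 : ℝ))).sub hS)).div (hγr.pow n)
    (pow_ne_zero n (neg_ne_zero.2 hD0))
  rw [rocT_limit_value_eq hn0 (by linarith) hc.ne' hD hD0] at hlim
  refine hlim.congr' ?_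
  filter_upwards [eventually_gt_atTop n, hγr.eventually_ne (neg_ne_zero.2 hD0)] with m hm hne
  refine (eq_div_of_mul_eq (pow_ne_zero n hne) ?_).symm
  rw [mul_comm]
  exact pow_mul_rocT hn hm (left_ne_zero_of_mul hne) hP1

/-- Limit of `T` established in Appendix D: as `m → ∞` with `γ_m/m → c > 0`,
`T(m,γ_m,P) → (−1)^n(1−P)D^{−n} − (−1)^n(1−P)^{(n−1)/n}e^{1/c}·
  Σ_{ℓ=0}^{n−1} ((−1)^ℓ/(ℓ!c^ℓ))·D^{−(n−ℓ)}` where `D = 1 − (c/n)·ln(1−P)`. -/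
theorem T_limit (n : ℕ) (hn : 1 ≤ n) (P : ℝ) (hP : P ∈ Set.Ioo (0 : ℝ) 1)
    (c : ℝ) (hc : 0 < c) (D : ℝ) (hD : D = 1 - c / n * Real.log (1 - P))
    (γ : ℕ → ℝ) (hγpos : ∀ m, 0 < γ m)
    (hγ : Tendsto (fun m : ℕ => γ m / m) atTop (nhds c)) :
    Tendsto (fun m : ℕ => rocT n m (γ m) P) atTop
      (nhds ((-1 : ℝ) ^ n * (1 - P) * (D ^ n)⁻¹ -
        (-1 : ℝ) ^ n * (1 - P) ^ (((n : ℝ) - 1) / n) * Real.exp (1 / c) *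
          ∑ ℓ ∈ Finset.range n, ((-1 : ℝ) ^ ℓ / (ℓ.factorial * c ^ ℓ)) * (D ^ (n - ℓ))⁻¹)) :=
  T_limit_general n hn P hP c hc D hD γ hγ
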